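/- Let f(x) = xQxᵗ + Lxᵗ be quadratic on Z_2^n and let T be the unitary on C^{2^n}⊗C^{2^n} defined by T|x,y⟩ = 2^{-n/2} Σ_z (-1)^{z·y}|x+y, z⟩. Then applying T to |ψ⟩⊗|ψ⟩, where |ψ⟩ = 2^{-n/2} Σ_x (-1)^{f(x)}|x⟩, yields 2^{-n/2} Σ_u (-1)^{uQᵗuᵗ + L·u} |u, u(Q+Qᵗ)⟩. -/

import Mathlib

/-
The operator `T` forces `x = u + y`, so the amplitude at `(u, z)` is a sum over `y` of
`(-1)^(z·y + f(u+y) + f(y))`. In characteristic 2 the polarization of `f` gives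
`f(u+y) + f(y) = f(u) + u(Q+Qᵀ)·y`, so the phase is `f(u)` plus the linear form
`(z + u(Q+Qᵀ))·y`, and the character sum over `y` is `2^n` if that form vanishes and `0` otherwise.
-/

open Finset Matrix

/-- The phase state `|ψ⟩ = 2^(-n/2) Σ_x (-1)^(f x) |x⟩` of a Boolean function `f`,
as a vector in `ℂ^(2^n)` indexed by `Z_2^n`. -/
noncomputable def phaseState {n : ℕ} (f : (Fin n → ZMod 2) → ZMod 2)
    (x : Fin n → ZMod 2) : ℂ :=
  ((Real.sqrt 2 ^ n : ℝ) : ℂ)⁻¹ * (-1 : ℂ) ^ ((f x).val)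

lemma neg_one_pow_val_add {R : Type*} [Ring R] (a b : ZMod 2) :
    (-1 : R) ^ (a + b).val = (-1) ^ a.val * (-1) ^ b.val := by
  rw [ZMod.val_add, ← neg_one_pow_eq_pow_mod_two, pow_add]

lemma neg_one_pow_val_eq_one_iff (a : ZMod 2) : (-1 : ℂ) ^ a.val = 1 ↔ a = 0 := by
  rw [neg_one_pow_eq_one_iff_even (by norm_num), ← ZMod.natCast_eq_zero_iff_even,
    ZMod.natCast_zmod_val]

section

variable {ι : Type*} [Fintype ι]

lemma sum_neg_one_pow_dotProduct [DecidableEq ι] (s : ι → ZMod 2) :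
    ∑ y : ι → ZMod 2, (-1 : ℂ) ^ (s ⬝ᵥ y).val = if s = 0 then 2 ^ Fintype.card ι else 0 := by
  let ψ : AddChar (ι → ZMod 2) ℂ :=
    (AddChar.zmodChar 2 (by norm_num : (-1 : ℂ) ^ 2 = 1)).compAddMonoidHom
      (AddMonoidHom.mk' (s ⬝ᵥ ·) (dotProduct_add s))
  have hψ : ψ = 0 ↔ s = 0 := by
    refine ⟨fun h => funext fun i => ?_, fun h => ?_⟩
    · have := DFunLike.congr_fun h (Pi.single i 1)
      simpa [ψ, AddChar.zmodChar_apply, neg_one_pow_val_eq_one_iff] using this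
    · ext y; simp [ψ, h]
  have := ψ.sum_eq_ite
  simp only [hψ, Fintype.card_fun, ZMod.card, Nat.cast_pow] at this
  simpa [ψ, AddChar.zmodChar_apply] using this

lemma Fintype.sum_sum_ite_eq_add {G M : Type*} [AddGroup G] [Fintype G] [DecidableEq G]
    [AddCommMonoid M] (u : G) (F : G → G → M) :
    ∑ x, ∑ y, (if u = x + y then F x y else 0) = ∑ y, F (u - y) y := by
  rw [Finset.sum_comm]
  simp_rw [← sub_eq_iff_eq_add, Fintype.sum_ite_eq]

variable {R : Type*} [CommRing R]

lemma add_dotProduct_mulVec_add (Q : Matrix ι ι R) (u y : ι → R) :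
    (u + y) ⬝ᵥ Q *ᵥ (u + y) = u ⬝ᵥ Q *ᵥ u + y ⬝ᵥ Q *ᵥ y + u ᵥ* (Q + Qᵀ) ⬝ᵥ y := by
  rw [mulVec_add, dotProduct_add, add_dotProduct, add_dotProduct, vecMul_add, add_dotProduct,
    ← dotProduct_mulVec, vecMul_transpose, dotProduct_comm (Q *ᵥ u) y]
  ring

lemma dotProduct_transpose_mulVec_self (Q : Matrix ι ι R) (u : ι → R) :
    u ⬝ᵥ Qᵀ *ᵥ u = u ⬝ᵥ Q *ᵥ u := by
  rw [mulVec_transpose, dotProduct_comm, dotProduct_mulVec]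

lemma quadratic_add_add_self [CharP R 2] (Q : Matrix ι ι R) (L u y : ι → R) :
    ((u + y) ⬝ᵥ Q *ᵥ (u + y) + L ⬝ᵥ (u + y)) + (y ⬝ᵥ Q *ᵥ y + L ⬝ᵥ y)
      = (u ⬝ᵥ Q *ᵥ u + L ⬝ᵥ u) + u ᵥ* (Q + Qᵀ) ⬝ᵥ y := by
  rw [add_dotProduct_mulVec_add, dotProduct_add]
  linear_combination (y ⬝ᵥ Q *ᵥ y + L ⬝ᵥ y) * CharTwo.two_eq_zero (R := R)

end

lemma Pi.neg_eq_self_mod_two {ι : Type*} (v : ι → ZMod 2) : -v = v :=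
  funext fun i => ZMod.neg_eq_self_mod_two (v i)

lemma ofReal_sqrt_two_pow_inv_sq_mul (n : ℕ) : ((Real.sqrt 2 ^ n : ℝ) : ℂ)⁻¹ ^ 2 * 2 ^ n = 1 := by
  have h : ((Real.sqrt 2 : ℝ) : ℂ) ^ 2 = 2 := by
    rw [← Complex.ofReal_pow, Real.sq_sqrt zero_le_two]; norm_num
  rw [Complex.ofReal_pow, inv_pow, ← pow_mul, mul_comm n, pow_mul, h]
  exact inv_mul_cancel₀ (pow_ne_zero _ two_ne_zero)

-- Componentwise: both sides are the amplitude of `|u, z⟩`.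
theorem T_on_quadratic_state_general (n : ℕ) (Q : Matrix (Fin n) (Fin n) (ZMod 2))
    (L : Fin n → ZMod 2)
    (u z : Fin n → ZMod 2) :
    ((Real.sqrt 2 ^ n : ℝ) : ℂ)⁻¹ *
        ∑ x : Fin n → ZMod 2, ∑ y : Fin n → ZMod 2,
          (if u = x + y then (-1 : ℂ) ^ ((z ⬝ᵥ y).val) else 0) *
            phaseState (fun v => v ⬝ᵥ Q.mulVec v + L ⬝ᵥ v) x *
            phaseState (fun v => v ⬝ᵥ Q.mulVec v + L ⬝ᵥ v) y
      = ((Real.sqrt 2 ^ n : ℝ) : ℂ)⁻¹ *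
          (if z = Matrix.vecMul u (Q + Qᵀ)
            then (-1 : ℂ) ^ ((u ⬝ᵥ Qᵀ.mulVec u + L ⬝ᵥ u).val) else 0) := by
  set c : ℂ := ((Real.sqrt 2 ^ n : ℝ) : ℂ)⁻¹
  set f : (Fin n → ZMod 2) → ZMod 2 := fun v => v ⬝ᵥ Q *ᵥ v + L ⬝ᵥ v
  have hsummand (y : Fin n → ZMod 2) :
      (-1 : ℂ) ^ (z ⬝ᵥ y).val * phaseState f (u + y) * phaseState f y
        = c ^ 2 * (-1) ^ (f u).val * (-1) ^ ((z + u ᵥ* (Q + Qᵀ)) ⬝ᵥ y).val := by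
    have hphase : z ⬝ᵥ y + (f (u + y) + f y) = f u + (z + u ᵥ* (Q + Qᵀ)) ⬝ᵥ y := by
      rw [quadratic_add_add_self, add_dotProduct]; ring
    have := congrArg (fun a : ZMod 2 => (-1 : ℂ) ^ a.val) hphase
    simp only [neg_one_pow_val_add] at this
    simp only [phaseState]
    linear_combination c ^ 2 * this
  simp_rw [ite_mul, zero_mul, Fintype.sum_sum_ite_eq_add, sub_eq_add_neg, Pi.neg_eq_self_mod_two,
    hsummand, ← mul_sum, sum_neg_one_pow_dotProduct, add_eq_zero_iff_eq_neg,
    Pi.neg_eq_self_mod_two, dotProduct_transpose_mulVec_self, Fintype.card_fin]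
  split_ifs
  · linear_combination c * (-1 : ℂ) ^ (f u).val * ofReal_sqrt_two_pow_inv_sq_mul n
  · simp

/-- Applying `T : |x,y⟩ ↦ 2^(-n/2) Σ_z (-1)^(z·y) |x+y, z⟩` to `|ψ⟩ ⊗ |ψ⟩` for the
quadratic function `f(x) = x Q xᵗ + L xᵗ` yields
`2^(-n/2) Σ_u (-1)^(u Qᵗ uᵗ + L·u) |u, u(Q+Qᵗ)⟩`: componentwise, for every `(u,z)` the
amplitude of `T(|ψ⟩⊗|ψ⟩)` equals the amplitude of the latter state. -/
theorem T_on_quadratic_state (n : ℕ) (Q : Matrix (Fin n) (Fin n) (ZMod 2))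
    (L : Fin n → ZMod 2) (hQ : ∀ i j : Fin n, j ≤ i → Q i j = 0)
    (u z : Fin n → ZMod 2) :
    ((Real.sqrt 2 ^ n : ℝ) : ℂ)⁻¹ *
        ∑ x : Fin n → ZMod 2, ∑ y : Fin n → ZMod 2,
          (if u = x + y then (-1 : ℂ) ^ ((z ⬝ᵥ y).val) else 0) *
            phaseState (fun v => v ⬝ᵥ Q.mulVec v + L ⬝ᵥ v) x *
            phaseState (fun v => v ⬝ᵥ Q.mulVec v + L ⬝ᵥ v) y
      = ((Real.sqrt 2 ^ n : ℝ) : ℂ)⁻¹ *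
          (if z = Matrix.vecMul u (Q + Qᵀ)
            then (-1 : ℂ) ^ ((u ⬝ᵥ Qᵀ.mulVec u + L ⬝ᵥ u).val) else 0) :=
  T_on_quadratic_state_general n Q L u z
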